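/- arXiv:1406.7345 — 3 statements merged into one kernel-verified Lean document; each statement's English description precedes it below -/
import Mathlib

section
/- If U₀, U₁ ∈ V_P are two maximizers of F_P on V_P (i.e., F_P(V) ≤ F_P(U₀) and F_P(V) ≤ F_P(U₁) for all V ∈ V_P), then U₁ − U₀ is equal a.e. on Λ^N to a real constant. The same statement holds with V_P replaced by V_{ρ^(m)}. -/
/-!
Adding a constant to a potential `V ∈ L¹(P)` changes neither `F_P(V)` nor membership in
`V_P` or `V_{ρ^(m)}`, so after shifting `U₁` both maximizers have the same `P`-mean, and then
maximality gives `Z(U₀) = Z(U₁) ≤ Z((U₀ + U₁) / 2)`. Strict convexity of `exp` gives the reverse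
inequality `Z((U₀ + U₁) / 2) ≤ (Z(U₀) + Z(U₁)) / 2`, with equality only where `U₀ = U₁`; hence
`U₀ = U₁` almost everywhere for the measure `e^{-W} d^N x`, which has the same null sets as
`d^N x`.
-/

open MeasureTheory Real Filter
open scoped ENNReal

noncomputable section

variable {Λ : Type*} [MeasurableSpace Λ]

/-- The product measure on `Λ^k` (the `k`-fold product of `μ`). -/
def pm (μ : Measure Λ) (k : ℕ) : Measure (Fin k → Λ) := Measure.pi fun _ => μ

/-- A function on `Λ^k` is symmetric if it is invariant under all permutations
of its variables. -/
def IsSymm' {Λ : Type*} (k : ℕ) (f : (Fin k → Λ) → ℝ) : Prop :=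
  ∀ σ : Equiv.Perm (Fin k), ∀ x, f (x ∘ σ) = f x

/-- The `m`-sum `Σ_{1 ≤ i₁ < ⋯ < i_m ≤ N} v(x_{i₁},…,x_{i_m})`. -/
def mSum {Λ : Type*} (N m : ℕ) (v : (Fin m → Λ) → ℝ) (x : Fin N → Λ) : ℝ :=
  ∑ s ∈ Finset.powersetCard m (Finset.univ : Finset (Fin N)),
    if h : s.card = m then v (fun i => x (s.orderEmbOfFin h i)) else 0

/-- `V` has `m`-sum structure with (symmetric, measurable, real-valued) generator `v`. -/
def HasSumStruct (μ : Measure Λ) (N m : ℕ) (V : (Fin N → Λ) → ℝ)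
    (v : (Fin m → Λ) → ℝ) : Prop :=
  IsSymm' m v ∧ Measurable v ∧ V =ᵐ[pm μ N] mSum N m v

/-- The measure `P d^N x`. -/
def Pmeas (μ : Measure Λ) (N : ℕ) (P : (Fin N → Λ) → ℝ) : Measure (Fin N → Λ) :=
  (pm μ N).withDensity fun x => ENNReal.ofReal (P x)

/-- The measure `e^{-W} d^N x`. -/
def Wmeas (μ : Measure Λ) (N : ℕ) (W : (Fin N → Λ) → ℝ) : Measure (Fin N → Λ) :=
  (pm μ N).withDensity fun x => ENNReal.ofReal (Real.exp (-(W x)))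

/-- The partition function `Z(V) = ∫ e^{-V-W} d^N x`, as an extended nonnegative real. -/
def ZE (μ : Measure Λ) (N : ℕ) (W V : (Fin N → Λ) → ℝ) : ℝ≥0∞ :=
  ∫⁻ x, ENNReal.ofReal (Real.exp (-(V x) - W x)) ∂(pm μ N)

/-- The partition function `Z(V)` as a real number. -/
def Zfun (μ : Measure Λ) (N : ℕ) (W V : (Fin N → Λ) → ℝ) : ℝ :=
  (ZE μ N W V).toReal

/-- The functional `F_P(V) = exp(-∫ V P d^N x) / Z(V)`. -/
def FP (μ : Measure Λ) (N : ℕ) (P W V : (Fin N → Λ) → ℝ) : ℝ :=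
  Real.exp (-∫ x, V x ∂(Pmeas μ N P)) / Zfun μ N W V

/-- Membership in the set `V_P`. -/
def memVP (μ : Measure Λ) (N m : ℕ) (P W V : (Fin N → Λ) → ℝ) : Prop :=
  Integrable V (Pmeas μ N P) ∧
  Integrable (fun x => Real.exp (-(V x))) (Wmeas μ N W) ∧
  ∃ v, HasSumStruct μ N m V v

/-- Gluing `(y, z) ∈ Λ^m × Λ^{N-m}` into a point of `Λ^N`. -/
def glue {Λ : Type*} {N m : ℕ} (h : m ≤ N) (y : Fin m → Λ) (z : Fin (N - m) → Λ) :
    Fin N → Λ :=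
  fun i => Fin.append y z (Fin.cast (by omega) i)

/-- The `m`-particle reduction `ρ^{(m)}` of `P`. -/
def rho (μ : Measure Λ) (N m : ℕ) (h : m ≤ N) (P : (Fin N → Λ) → ℝ)
    (y : Fin m → Λ) : ℝ :=
  ∫ z, P (glue h y z) ∂(pm μ (N - m))

/-- The measure `ρ^{(m)} d^m x`. -/
def rhomeas (μ : Measure Λ) (N m : ℕ) (h : m ≤ N) (P : (Fin N → Λ) → ℝ) :
    Measure (Fin m → Λ) :=
  (pm μ m).withDensity fun y => ENNReal.ofReal (rho μ N m h P y)

/-- Membership in the set `V_{ρ^{(m)}}`. -/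
def memVrho (μ : Measure Λ) (N m : ℕ) (h : m ≤ N) (P W V : (Fin N → Λ) → ℝ) : Prop :=
  Integrable (fun x => Real.exp (-(V x))) (Wmeas μ N W) ∧
  ∃ v, HasSumStruct μ N m V v ∧ Integrable v (rhomeas μ N m h P)

/-- The `m`-particle density `ρ_U^{(m)}` associated with the potential `U`. -/
def rhoU (μ : Measure Λ) (N m : ℕ) (h : m ≤ N) (W U : (Fin N → Λ) → ℝ)
    (y : Fin m → Λ) : ℝ :=
  (∫ z, Real.exp (-(W (glue h y z)) - U (glue h y z)) ∂(pm μ (N - m))) / Zfun μ N W U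

section GibbsRatio

variable {α : Type*} [MeasurableSpace α]

lemma ofReal_integral_le_lintegral_ofReal {μ : Measure α} (f : α → ℝ) :
    ENNReal.ofReal (∫ x, f x ∂μ) ≤ ∫⁻ x, ENNReal.ofReal (f x) ∂μ := by
  by_cases hf : Integrable f μ
  · refine ENNReal.ofReal_le_of_le_toReal ?_
    rw [integral_eq_lintegral_pos_part_sub_lintegral_neg_part hf]
    exact sub_le_self _ ENNReal.toReal_nonneg
  · simp [integral_undef hf]

lemma aemeasurable_of_integrable_exp_neg {μ : Measure α} {f : α → ℝ}
    (hf : Integrable (fun x => exp (-f x)) μ) : AEMeasurable f μ :=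
  (hf.aemeasurable.log.neg).congr (.of_forall fun x => by simp)

lemma exp_neg_midpoint_lt {p q : ℝ} (hpq : p ≠ q) :
    exp (-((p + q) / 2)) < (exp (-p) + exp (-q)) / 2 := by
  have h := strictConvexOn_exp.2 (Set.mem_univ (-p)) (Set.mem_univ (-q)) (neg_injective.ne hpq)
    (by norm_num : (0 : ℝ) < 1 / 2) (by norm_num : (0 : ℝ) < 1 / 2) (by norm_num)
  simp only [smul_eq_mul] at h
  calc exp (-((p + q) / 2)) = exp (1 / 2 * -p + 1 / 2 * -q) := by ring_nf
    _ < 1 / 2 * exp (-p) + 1 / 2 * exp (-q) := h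
    _ = (exp (-p) + exp (-q)) / 2 := by ring

lemma exp_neg_midpoint_le (p q : ℝ) :
    exp (-((p + q) / 2)) ≤ (exp (-p) + exp (-q)) / 2 := by
  rcases eq_or_ne p q with rfl | hpq
  · simp
  · exact (exp_neg_midpoint_lt hpq).le

lemma MeasureTheory.Integrable.exp_neg_midpoint {ν : Measure α} {f g : α → ℝ}
    (hf : Integrable (fun x => exp (-f x)) ν) (hg : Integrable (fun x => exp (-g x)) ν) :
    Integrable (fun x => exp (-((f x + g x) / 2))) ν := by
  have hmeas : AEMeasurable (fun x => (f x + g x) / 2) ν :=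
    ((aemeasurable_of_integrable_exp_neg hf).add
      (aemeasurable_of_integrable_exp_neg hg)).div_const 2
  refine ((hf.add hg).div_const 2).mono'
    (measurable_exp.comp_aemeasurable hmeas.neg).aestronglyMeasurable (.of_forall fun x => ?_)
  rw [norm_of_nonneg (exp_nonneg _)]
  exact exp_neg_midpoint_le _ _

lemma ae_eq_of_integral_exp_neg_le_midpoint {ν : Measure α} {f g : α → ℝ}
    (hf : Integrable (fun x => exp (-f x)) ν) (hg : Integrable (fun x => exp (-g x)) ν)
    (h : (∫ x, exp (-f x) ∂ν + ∫ x, exp (-g x) ∂ν) / 2 ≤ ∫ x, exp (-((f x + g x) / 2)) ∂ν) :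
    f =ᵐ[ν] g := by
  have hmean := (hf.add hg).div_const 2
  have hle : (fun x => exp (-((f x + g x) / 2))) ≤ᵐ[ν] fun x => (exp (-f x) + exp (-g x)) / 2 :=
    .of_forall fun x => exp_neg_midpoint_le _ _
  have hint_eq : ∫ x, exp (-((f x + g x) / 2)) ∂ν = ∫ x, (exp (-f x) + exp (-g x)) / 2 ∂ν := by
    refine le_antisymm (integral_mono_ae (hf.exp_neg_midpoint hg) hmean hle) ?_
    rwa [integral_div, integral_add hf hg]
  filter_upwards [(integral_eq_iff_of_ae_le (hf.exp_neg_midpoint hg) hmean hle).1 hint_eq]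
    with x hx
  by_contra hne
  exact (exp_neg_midpoint_lt hne).ne hx

lemma integral_exp_neg_add_const (ν : Measure α) (V : α → ℝ) (c : ℝ) :
    ∫ x, exp (-(V x + c)) ∂ν = exp (-c) * ∫ x, exp (-V x) ∂ν := by
  rw [← integral_const_mul]
  simp only [neg_add, exp_add, mul_comm]

lemma MeasureTheory.Integrable.exp_neg_add_const {ν : Measure α} {f : α → ℝ}
    (hf : Integrable (fun x => exp (-f x)) ν) (c : ℝ) :
    Integrable (fun x => exp (-(f x + c))) ν :=
  (hf.mul_const (exp (-c))).congr (.of_forall fun x => by simp only [neg_add, exp_add])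

/-- The functional `F_P`, with `P d^N x` and `e^{-W} d^N x` replaced by arbitrary measures. -/
def gibbsRatio (μ ν : Measure α) (V : α → ℝ) : ℝ :=
  exp (-∫ x, V x ∂μ) / ∫ x, exp (-V x) ∂ν

variable {μ ν : Measure α}

lemma gibbsRatio_add_const [IsProbabilityMeasure μ] {V : α → ℝ} (hV : Integrable V μ) (c : ℝ) :
    gibbsRatio μ ν (fun x => V x + c) = gibbsRatio μ ν V := by
  rw [gibbsRatio, gibbsRatio, integral_exp_neg_add_const, integral_add hV (integrable_const c),
    integral_const, probReal_univ, one_smul, neg_add, exp_add, mul_comm (exp (-c)),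
    mul_div_mul_right _ _ (exp_ne_zero _)]

lemma gibbsRatio_le_gibbsRatio_iff {U V : α → ℝ} (hUV : ∫ x, V x ∂μ = ∫ x, U x ∂μ)
    (hU : 0 < ∫ x, exp (-U x) ∂ν) (hV : 0 < ∫ x, exp (-V x) ∂ν) :
    gibbsRatio μ ν V ≤ gibbsRatio μ ν U ↔ ∫ x, exp (-U x) ∂ν ≤ ∫ x, exp (-V x) ∂ν := by
  rw [gibbsRatio, gibbsRatio, hUV]
  exact div_le_div_iff_of_pos_left (exp_pos _) hV hU

structure IsShiftMidpointClosed (𝒞 : Set (α → ℝ)) : Prop where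
  add_const_mem : ∀ V ∈ 𝒞, ∀ c : ℝ, (fun x => V x + c) ∈ 𝒞
  midpoint_mem : ∀ V₀ ∈ 𝒞, ∀ V₁ ∈ 𝒞, (fun x => (V₀ x + V₁ x) / 2) ∈ 𝒞

variable [IsProbabilityMeasure μ] [NeZero ν] {𝒞 : Set (α → ℝ)}

/-- Off `L¹(μ)` the integral in `gibbsRatio` takes the junk value `0`, so adding `1` to such a
potential strictly increases the ratio. -/
lemma integrable_of_isMaxOn_gibbsRatio (h𝒞 : IsShiftMidpointClosed 𝒞)
    (hexp : ∀ V ∈ 𝒞, Integrable (fun x => exp (-V x)) ν) {U : α → ℝ} (hU : U ∈ 𝒞)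
    (hmax : IsMaxOn (gibbsRatio μ ν) 𝒞 U) : Integrable U μ := by
  by_contra hint
  have hint₁ : ¬ Integrable (fun x => U x + 1) μ := fun h =>
    hint ((h.sub (integrable_const 1)).congr (.of_forall fun x => by simp))
  have hle := isMaxOn_iff.1 hmax _ (h𝒞.add_const_mem U hU 1)
  have hZ : 0 < ∫ x, exp (-U x) ∂ν := integral_exp_pos (hexp U hU)
  rw [gibbsRatio, gibbsRatio, integral_undef hint, integral_undef hint₁,
    integral_exp_neg_add_const, div_le_div_iff_of_pos_left (exp_pos _) (by positivity) hZ] at hle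
  have : exp (-1) * ∫ x, exp (-U x) ∂ν < ∫ x, exp (-U x) ∂ν :=
    mul_lt_of_lt_one_left hZ (exp_lt_one_iff.2 (by norm_num))
  linarith

theorem ae_eq_add_const_of_isMaxOn_gibbsRatio (h𝒞 : IsShiftMidpointClosed 𝒞)
    (hexp : ∀ V ∈ 𝒞, Integrable (fun x => exp (-V x)) ν) {U₀ U₁ : α → ℝ}
    (hU₀ : U₀ ∈ 𝒞) (hU₁ : U₁ ∈ 𝒞) (hmax₀ : IsMaxOn (gibbsRatio μ ν) 𝒞 U₀)
    (hmax₁ : IsMaxOn (gibbsRatio μ ν) 𝒞 U₁) :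
    ∃ C : ℝ, (fun x => U₁ x - U₀ x) =ᵐ[ν] fun _ => C := by
  have hint₀ := integrable_of_isMaxOn_gibbsRatio h𝒞 hexp hU₀ hmax₀
  have hint₁ := integrable_of_isMaxOn_gibbsRatio h𝒞 hexp hU₁ hmax₁
  have hZ : ∀ V ∈ 𝒞, 0 < ∫ x, exp (-V x) ∂ν := fun V hV => integral_exp_pos (hexp V hV)
  set c := ∫ x, U₀ x ∂μ - ∫ x, U₁ x ∂μ
  set U₂ : α → ℝ := fun x => U₁ x + c
  have hU₂ : U₂ ∈ 𝒞 := h𝒞.add_const_mem U₁ hU₁ c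
  have hint₂ : Integrable U₂ μ := hint₁.add (integrable_const c)
  have hmean₂ : ∫ x, U₂ x ∂μ = ∫ x, U₀ x ∂μ := by
    simp [U₂, c, integral_add hint₁ (integrable_const _)]
  set M : α → ℝ := fun x => (U₀ x + U₂ x) / 2
  have hM : M ∈ 𝒞 := h𝒞.midpoint_mem U₀ hU₀ U₂ hU₂
  have hmeanM : ∫ x, M x ∂μ = ∫ x, U₀ x ∂μ := by
    rw [integral_div, integral_add hint₀ hint₂, hmean₂]
    ring
  have hF₂ : gibbsRatio μ ν U₂ = gibbsRatio μ ν U₀ := by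
    rw [gibbsRatio_add_const hint₁]
    exact le_antisymm (isMaxOn_iff.1 hmax₀ U₁ hU₁) (isMaxOn_iff.1 hmax₁ U₀ hU₀)
  have hZ₂ : ∫ x, exp (-U₂ x) ∂ν = ∫ x, exp (-U₀ x) ∂ν := le_antisymm
    ((gibbsRatio_le_gibbsRatio_iff hmean₂.symm (hZ U₂ hU₂) (hZ U₀ hU₀)).1 hF₂.ge)
    ((gibbsRatio_le_gibbsRatio_iff hmean₂ (hZ U₀ hU₀) (hZ U₂ hU₂)).1 hF₂.le)
  have hZM : ∫ x, exp (-U₀ x) ∂ν ≤ ∫ x, exp (-M x) ∂ν :=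
    (gibbsRatio_le_gibbsRatio_iff hmeanM (hZ U₀ hU₀) (hZ M hM)).1 (isMaxOn_iff.1 hmax₀ M hM)
  have hae : U₀ =ᵐ[ν] U₂ :=
    ae_eq_of_integral_exp_neg_le_midpoint (hexp U₀ hU₀) (hexp U₂ hU₂) (by linarith)
  exact ⟨-c, hae.mono fun x hx => by simp only [hx, U₂]; ring⟩

end GibbsRatio

section mSum

variable {Λ : Type*} {N m : ℕ}

lemma mSum_add (v w : (Fin m → Λ) → ℝ) (x : Fin N → Λ) :
    mSum N m (fun y => v y + w y) x = mSum N m v x + mSum N m w x := by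
  rw [mSum, mSum, mSum, ← Finset.sum_add_distrib]
  exact Finset.sum_congr rfl fun s _ => by split_ifs <;> simp

lemma mSum_div (v : (Fin m → Λ) → ℝ) (c : ℝ) (x : Fin N → Λ) :
    mSum N m (fun y => v y / c) x = mSum N m v x / c := by
  rw [mSum, mSum, Finset.sum_div]
  exact Finset.sum_congr rfl fun s _ => by split_ifs <;> simp

lemma mSum_const (k : ℝ) (x : Fin N → Λ) :
    mSum N m (fun _ => k) x = N.choose m * k := by
  rw [mSum, Finset.sum_congr rfl fun s hs => dif_pos (Finset.mem_powersetCard.1 hs).2,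
    Finset.sum_const, Finset.card_powersetCard, Finset.card_univ, Fintype.card_fin, nsmul_eq_mul]

end mSum

section SumStructure

variable {μ : Measure Λ} {N m : ℕ} {V V₀ V₁ : (Fin N → Λ) → ℝ} {v v₀ v₁ : (Fin m → Λ) → ℝ}

lemma HasSumStruct.add_const (h : HasSumStruct μ N m V v) (hmN : m ≤ N) (c : ℝ) :
    HasSumStruct μ N m (fun x => V x + c) (fun y => v y + c / N.choose m) := by
  obtain ⟨hsymm, hmeas, hae⟩ := h
  have hchoose : (N.choose m : ℝ) ≠ 0 := Nat.cast_ne_zero.2 (Nat.choose_pos hmN).ne'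
  refine ⟨fun σ x => by simp only [hsymm σ x], hmeas.add_const _, ?_⟩
  filter_upwards [hae] with x hx
  rw [mSum_add, mSum_const, mul_div_cancel₀ _ hchoose, ← hx]

lemma HasSumStruct.midpoint (h₀ : HasSumStruct μ N m V₀ v₀) (h₁ : HasSumStruct μ N m V₁ v₁) :
    HasSumStruct μ N m (fun x => (V₀ x + V₁ x) / 2) (fun y => (v₀ y + v₁ y) / 2) := by
  obtain ⟨hsymm₀, hmeas₀, hae₀⟩ := h₀
  obtain ⟨hsymm₁, hmeas₁, hae₁⟩ := h₁
  refine ⟨fun σ x => by simp only [hsymm₀ σ x, hsymm₁ σ x], (hmeas₀.add hmeas₁).div_const 2, ?_⟩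
  filter_upwards [hae₀, hae₁] with x hx₀ hx₁
  rw [mSum_div, mSum_add, ← hx₀, ← hx₁]

end SumStructure

section ProductMeasure

variable (μ : Measure Λ) [SigmaFinite μ]

instance (k : ℕ) : SigmaFinite (pm μ k) := by
  unfold pm
  infer_instance

lemma pm_neZero (hμ : μ ≠ 0) (k : ℕ) : NeZero (pm μ k) := by
  refine ⟨fun h => ?_⟩
  have huniv := congrArg (fun ν : Measure (Fin k → Λ) => ν Set.univ) h
  simp only [pm, Measure.pi_univ, Measure.coe_zero, Pi.zero_apply, Finset.prod_eq_zero_iff,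
    Finset.mem_univ, true_and, Measure.measure_univ_eq_zero] at huniv
  exact hμ huniv.choose_spec

lemma glue_measurePreserving {N m : ℕ} (hmN : m ≤ N) :
    MeasurePreserving (fun p : (Fin m → Λ) × (Fin (N - m) → Λ) => glue hmN p.1 p.2)
      ((pm μ m).prod (pm μ (N - m))) (pm μ N) := by
  let e : Fin m ⊕ Fin (N - m) ≃ Fin N :=
    finSumFinEquiv.trans (finCongr (Nat.add_sub_cancel' hmN))
  have hglue : (fun p : (Fin m → Λ) × (Fin (N - m) → Λ) => glue hmN p.1 p.2) =
      MeasurableEquiv.piCongrLeft (fun _ => Λ) e ∘ (MeasurableEquiv.sumPiEquivProdPi _).symm := by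
    funext p i
    obtain ⟨u, rfl⟩ := e.surjective i
    simp only [Function.comp_apply, MeasurableEquiv.coe_piCongrLeft, Equiv.piCongrLeft_apply_apply]
    rcases u with a | b <;> simp [glue, e] <;> rfl
  rw [hglue]
  exact (measurePreserving_piCongrLeft (fun _ => μ) e).comp
    (measurePreserving_sumPiEquivProdPi_symm fun _ => μ)

variable {μ} {N : ℕ} {P W : (Fin N → Λ) → ℝ}

lemma isFiniteMeasure_rhomeas {m : ℕ} (hmN : m ≤ N) (hPmeas : Measurable P)
    (hPprob : ∫⁻ x, ENNReal.ofReal (P x) ∂(pm μ N) = 1) :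
    IsFiniteMeasure (rhomeas μ N m hmN P) := by
  refine ⟨?_⟩
  rw [rhomeas, withDensity_apply _ MeasurableSet.univ, setLIntegral_univ]
  have hglue := glue_measurePreserving μ hmN
  calc ∫⁻ y, ENNReal.ofReal (rho μ N m hmN P y) ∂(pm μ m)
      ≤ ∫⁻ y, ∫⁻ z, ENNReal.ofReal (P (glue hmN y z)) ∂(pm μ (N - m)) ∂(pm μ m) :=
        lintegral_mono fun y => ofReal_integral_le_lintegral_ofReal _
    _ = ∫⁻ x, ENNReal.ofReal (P x) ∂(pm μ N) := by
        rw [← lintegral_prod (fun p => ENNReal.ofReal (P (glue hmN p.1 p.2)))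
            (hPmeas.ennreal_ofReal.comp hglue.measurable).aemeasurable,
          hglue.lintegral_comp hPmeas.ennreal_ofReal]
    _ < ∞ := by simp [hPprob]

end ProductMeasure

section Densities

variable {μ : Measure Λ} {N : ℕ} {P W : (Fin N → Λ) → ℝ}

lemma isProbabilityMeasure_Pmeas (hPprob : ∫⁻ x, ENNReal.ofReal (P x) ∂(pm μ N) = 1) :
    IsProbabilityMeasure (Pmeas μ N P) :=
  ⟨by rw [Pmeas, withDensity_apply _ MeasurableSet.univ, setLIntegral_univ, hPprob]⟩

lemma pm_absolutelyContinuous_Wmeas (hW : Measurable W) : pm μ N ≪ Wmeas μ N W :=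
  withDensity_absolutelyContinuous' (by fun_prop : Measurable _).aemeasurable
    (.of_forall fun x => by simp [exp_pos])

lemma Zfun_eq_integral (hW : Measurable W) {V : (Fin N → Λ) → ℝ}
    (hV : AEStronglyMeasurable (fun x => exp (-V x)) (Wmeas μ N W)) :
    Zfun μ N W V = ∫ x, exp (-V x) ∂(Wmeas μ N W) := by
  rw [integral_eq_lintegral_of_nonneg_ae (.of_forall fun x => (exp_pos _).le) hV, Wmeas,
    lintegral_withDensity_eq_lintegral_mul_non_measurable _ (by fun_prop)
      (.of_forall fun x => ENNReal.ofReal_lt_top), Zfun, ZE]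
  congr 2 with x
  rw [Pi.mul_apply, ← ENNReal.ofReal_mul (exp_pos _).le, ← exp_add]
  ring_nf

lemma FP_eq_gibbsRatio (hW : Measurable W) {V : (Fin N → Λ) → ℝ}
    (hV : Integrable (fun x => exp (-V x)) (Wmeas μ N W)) :
    FP μ N P W V = gibbsRatio (Pmeas μ N P) (Wmeas μ N W) V := by
  rw [FP, gibbsRatio, Zfun_eq_integral hW hV.aestronglyMeasurable]

end Densities

section PotentialClasses

variable {μ : Measure Λ} {N m : ℕ} {P W : (Fin N → Λ) → ℝ}

lemma isShiftMidpointClosed_memVP (hmN : m ≤ N)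
    (hPprob : ∫⁻ x, ENNReal.ofReal (P x) ∂(pm μ N) = 1) :
    IsShiftMidpointClosed {V | memVP μ N m P W V} := by
  have := isProbabilityMeasure_Pmeas hPprob
  refine ⟨fun V ⟨hP, hexp, v, hv⟩ c => ?_,
    fun V₀ ⟨hP₀, hexp₀, v₀, hv₀⟩ V₁ ⟨hP₁, hexp₁, v₁, hv₁⟩ => ?_⟩
  · exact ⟨hP.add (integrable_const c), hexp.exp_neg_add_const c, _, hv.add_const hmN c⟩
  · exact ⟨(hP₀.add hP₁).div_const 2, hexp₀.exp_neg_midpoint hexp₁, _, hv₀.midpoint hv₁⟩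

lemma isShiftMidpointClosed_memVrho [SigmaFinite μ] (hmN : m ≤ N) (hPmeas : Measurable P)
    (hPprob : ∫⁻ x, ENNReal.ofReal (P x) ∂(pm μ N) = 1) :
    IsShiftMidpointClosed {V | memVrho μ N m hmN P W V} := by
  have := isFiniteMeasure_rhomeas hmN hPmeas hPprob
  refine ⟨fun V ⟨hexp, v, hv, hvρ⟩ c => ?_,
    fun V₀ ⟨hexp₀, v₀, hv₀, hvρ₀⟩ V₁ ⟨hexp₁, v₁, hv₁, hvρ₁⟩ => ?_⟩
  · exact ⟨hexp.exp_neg_add_const c, _, hv.add_const hmN c, hvρ.add (integrable_const _)⟩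
  · exact ⟨hexp₀.exp_neg_midpoint hexp₁, _, hv₀.midpoint hv₁, (hvρ₀.add hvρ₁).div_const 2⟩

theorem ae_sub_eq_const_of_FP_maximizers [SigmaFinite μ] (hμ : μ ≠ 0) (hW : Measurable W)
    (hPprob : ∫⁻ x, ENNReal.ofReal (P x) ∂(pm μ N) = 1) {𝒞 : Set ((Fin N → Λ) → ℝ)}
    (h𝒞 : IsShiftMidpointClosed 𝒞) (hexp : ∀ V ∈ 𝒞, Integrable (fun x => exp (-V x)) (Wmeas μ N W))
    {U₀ U₁ : (Fin N → Λ) → ℝ} (hU₀ : U₀ ∈ 𝒞) (hU₁ : U₁ ∈ 𝒞)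
    (hmax₀ : ∀ V ∈ 𝒞, FP μ N P W V ≤ FP μ N P W U₀)
    (hmax₁ : ∀ V ∈ 𝒞, FP μ N P W V ≤ FP μ N P W U₁) :
    ∃ C : ℝ, (fun x => U₁ x - U₀ x) =ᵐ[pm μ N] fun _ => C := by
  have := isProbabilityMeasure_Pmeas hPprob
  have hac := pm_absolutelyContinuous_Wmeas (μ := μ) hW
  have : NeZero (Wmeas μ N W) := ⟨fun h => (pm_neZero μ hμ N).out (by simpa [h] using hac)⟩
  have hmax : ∀ U ∈ 𝒞, (∀ V ∈ 𝒞, FP μ N P W V ≤ FP μ N P W U) →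
      IsMaxOn (gibbsRatio (Pmeas μ N P) (Wmeas μ N W)) 𝒞 U := fun U hU h =>
    isMaxOn_iff.2 fun V hV => by
      simpa only [FP_eq_gibbsRatio hW (hexp V hV), FP_eq_gibbsRatio hW (hexp U hU)] using h V hV
  obtain ⟨C, hC⟩ := ae_eq_add_const_of_isMaxOn_gibbsRatio h𝒞 hexp hU₀ hU₁
    (hmax U₀ hU₀ hmax₀) (hmax U₁ hU₁ hmax₁)
  exact ⟨C, hac.ae_eq hC⟩

end PotentialClasses

theorem statement6_general (μ : Measure Λ) [SigmaFinite μ] (hμ : μ ≠ 0)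
    (N m : ℕ) (hmN : m ≤ N)
    (P W : (Fin N → Λ) → ℝ) (hPmeas : Measurable P)
    (hPprob : ∫⁻ x, ENNReal.ofReal (P x) ∂(pm μ N) = 1)
    (hWmeas : Measurable W) :
    (∀ U₀ U₁ : (Fin N → Λ) → ℝ,
        memVP μ N m P W U₀ → memVP μ N m P W U₁ →
        (∀ V, memVP μ N m P W V → FP μ N P W V ≤ FP μ N P W U₀) →
        (∀ V, memVP μ N m P W V → FP μ N P W V ≤ FP μ N P W U₁) →
        ∃ C : ℝ, (fun x => U₁ x - U₀ x) =ᵐ[pm μ N] fun _ => C) ∧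
    (∀ U₀ U₁ : (Fin N → Λ) → ℝ,
        memVrho μ N m hmN P W U₀ → memVrho μ N m hmN P W U₁ →
        (∀ V, memVrho μ N m hmN P W V → FP μ N P W V ≤ FP μ N P W U₀) →
        (∀ V, memVrho μ N m hmN P W V → FP μ N P W V ≤ FP μ N P W U₁) →
        ∃ C : ℝ, (fun x => U₁ x - U₀ x) =ᵐ[pm μ N] fun _ => C) :=
  ⟨fun _ _ h₀ h₁ hmax₀ hmax₁ => ae_sub_eq_const_of_FP_maximizers hμ hWmeas hPprob
      (isShiftMidpointClosed_memVP hmN hPprob) (fun _ hV => hV.2.1) h₀ h₁ hmax₀ hmax₁,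
    fun _ _ h₀ h₁ hmax₀ hmax₁ => ae_sub_eq_const_of_FP_maximizers hμ hWmeas hPprob
      (isShiftMidpointClosed_memVrho hmN hPmeas hPprob) (fun _ hV => hV.1) h₀ h₁ hmax₀ hmax₁⟩

/-- Any two maximizers of `F_P` on `V_P` differ a.e. by a real
constant; the same holds on `V_{ρ^{(m)}}`. -/
theorem statement6 (μ : Measure Λ) [SigmaFinite μ] (hμ : μ ≠ 0)
    (N m : ℕ) (hN : 2 ≤ N) (hm : 1 ≤ m) (hmN : m ≤ N)
    (P W : (Fin N → Λ) → ℝ) (hPmeas : Measurable P)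
    (hPprob : ∫⁻ x, ENNReal.ofReal (P x) ∂(pm μ N) = 1)
    (hPpos : ∀ᵐ x ∂(pm μ N), 0 < P x)
    (hWmeas : Measurable W) :
    (∀ U₀ U₁ : (Fin N → Λ) → ℝ,
        memVP μ N m P W U₀ → memVP μ N m P W U₁ →
        (∀ V, memVP μ N m P W V → FP μ N P W V ≤ FP μ N P W U₀) →
        (∀ V, memVP μ N m P W V → FP μ N P W V ≤ FP μ N P W U₁) →
        ∃ C : ℝ, (fun x => U₁ x - U₀ x) =ᵐ[pm μ N] fun _ => C) ∧
    (∀ U₀ U₁ : (Fin N → Λ) → ℝ,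
        memVrho μ N m hmN P W U₀ → memVrho μ N m hmN P W U₁ →
        (∀ V, memVrho μ N m hmN P W V → FP μ N P W V ≤ FP μ N P W U₀) →
        (∀ V, memVrho μ N m hmN P W V → FP μ N P W V ≤ FP μ N P W U₁) →
        ∃ C : ℝ, (fun x => U₁ x - U₀ x) =ᵐ[pm μ N] fun _ => C) :=
  statement6_general μ hμ N m hmN P W hPmeas hPprob hWmeas

end
end

section
/- Assume (W + log P)₊ ∈ L¹(Λ^N; P d^N x). Then F_P is bounded on V_P: for every V ∈ V_P, 0 < F_P(V) ≤ exp(∫_{Λ^N} (W + log P)₊ P d^N x). -/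
open MeasureTheory Real Filter
open scoped ENNReal

noncomputable section

variable {Λ : Type*} [MeasurableSpace Λ]

/-!
Write `ν = P d^N x` and `M = (W + log P)₊`. Jensen's inequality for `exp` and the probability
measure `ν`, applied to `-V - M`, gives
`exp(-∫ V dν - ∫ M dν) ≤ ∫ e^{-V-M} P d^N x = ∫ e^{-V-M+log P} d^N x ≤ ∫ e^{-V-W} d^N x = Z(V)`,
since `-M + log P ≤ -W`. The left side is positive and `Z(V)` is finite because
`e^{-V} ∈ L¹(e^{-W} d^N x)`, so `0 < Z(V) < ∞` and `F_P(V) ≤ exp(∫ M dν)`.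
-/

section WithDensity

variable {α : Type*} [MeasurableSpace α]

theorem ofReal_exp_integral_le_lintegral {ν : Measure α} [IsProbabilityMeasure ν] {g : α → ℝ}
    (hg : Integrable g ν) :
    ENNReal.ofReal (exp (∫ x, g x ∂ν)) ≤ ∫⁻ x, ENNReal.ofReal (exp (g x)) ∂ν := by
  by_cases htop : ∫⁻ x, ENNReal.ofReal (exp (g x)) ∂ν = ∞
  · simp [htop]
  have hexp : Integrable (fun x => exp (g x)) ν := by
    refine ⟨continuous_exp.comp_aestronglyMeasurable hg.1, ?_⟩
    simpa [HasFiniteIntegral, Real.enorm_eq_ofReal (exp_nonneg _), lt_top_iff_ne_top] using htop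
  rw [← ofReal_integral_eq_lintegral_ofReal hexp (.of_forall fun x => (exp_pos _).le)]
  exact ENNReal.ofReal_le_ofReal <| convexOn_exp.map_integral_le continuous_exp.continuousOn
    isClosed_univ (.of_forall fun _ => Set.mem_univ _) hg hexp

theorem lintegral_ofReal_exp_withDensity_exp (μ : Measure α) {a : α → ℝ} (ha : AEMeasurable a μ)
    (h : α → ℝ) :
    ∫⁻ x, ENNReal.ofReal (exp (h x)) ∂μ.withDensity (fun x => ENNReal.ofReal (exp (a x))) =
      ∫⁻ x, ENNReal.ofReal (exp (a x + h x)) ∂μ := by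
  rw [lintegral_withDensity_eq_lintegral_mul_non_measurable₀ μ (by fun_prop)
    (.of_forall fun _ => ENNReal.ofReal_lt_top)]
  simp only [Pi.mul_apply, ← ENNReal.ofReal_mul (exp_pos _).le, ← exp_add]

theorem withDensity_ofReal_eq_exp_log (μ : Measure α) {P : α → ℝ} (hP : ∀ᵐ x ∂μ, 0 < P x) :
    μ.withDensity (fun x => ENNReal.ofReal (P x)) =
      μ.withDensity (fun x => ENNReal.ofReal (exp (log (P x)))) :=
  withDensity_congr_ae (hP.mono fun x hx => by simp only [exp_log hx])

theorem ofReal_exp_neg_integral_le_lintegral {μ : Measure α} {P W V : α → ℝ}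
    (hP : AEMeasurable P μ) (hPprob : ∫⁻ x, ENNReal.ofReal (P x) ∂μ = 1)
    (hPpos : ∀ᵐ x ∂μ, 0 < P x) (hV : Integrable V (μ.withDensity fun x => ENNReal.ofReal (P x)))
    (hWP : Integrable (fun x => max (W x + log (P x)) 0)
      (μ.withDensity fun x => ENNReal.ofReal (P x))) :
    ENNReal.ofReal (exp (-∫ x, V x ∂μ.withDensity (fun x => ENNReal.ofReal (P x))
        - ∫ x, max (W x + log (P x)) 0 ∂μ.withDensity (fun x => ENNReal.ofReal (P x))))
      ≤ ∫⁻ x, ENNReal.ofReal (exp (-V x - W x)) ∂μ := by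
  set ν := μ.withDensity fun x => ENNReal.ofReal (P x) with hν
  have : IsProbabilityMeasure ν := ⟨by rw [withDensity_apply _ .univ, setLIntegral_univ, hPprob]⟩
  calc _ = ENNReal.ofReal (exp (∫ x, (-V x - max (W x + log (P x)) 0) ∂ν)) := by
        rw [integral_sub (f := fun x => -V x) hV.neg hWP, integral_neg]
    _ ≤ ∫⁻ x, ENNReal.ofReal (exp (-V x - max (W x + log (P x)) 0)) ∂ν :=
        ofReal_exp_integral_le_lintegral (hV.neg.sub hWP)
    _ = ∫⁻ x, ENNReal.ofReal (exp (log (P x) + (-V x - max (W x + log (P x)) 0))) ∂μ := by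
        rw [hν, withDensity_ofReal_eq_exp_log μ hPpos,
          lintegral_ofReal_exp_withDensity_exp μ (a := fun x => log (P x)) (by fun_prop)]
    _ ≤ ∫⁻ x, ENNReal.ofReal (exp (-V x - W x)) ∂μ :=
        lintegral_mono fun x => ENNReal.ofReal_le_ofReal <| exp_le_exp.2 <| by
          linarith [le_max_left (W x + log (P x)) 0]

end WithDensity

theorem ZE_eq_lintegral_Wmeas (μ : Measure Λ) [SigmaFinite μ] (N : ℕ) {W : (Fin N → Λ) → ℝ}
    (hW : Measurable W) (V : (Fin N → Λ) → ℝ) :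
    ZE μ N W V = ∫⁻ x, ENNReal.ofReal (exp (-V x)) ∂Wmeas μ N W := by
  rw [Wmeas, lintegral_ofReal_exp_withDensity_exp _ (a := fun x => -W x) (by fun_prop), ZE]
  simp only [neg_add_eq_sub]

theorem ZE_ne_top {μ : Measure Λ} [SigmaFinite μ] {N : ℕ} {W V : (Fin N → Λ) → ℝ}
    (hW : Measurable W) (hV : Integrable (fun x => exp (-V x)) (Wmeas μ N W)) :
    ZE μ N W V ≠ ∞ := by
  rw [ZE_eq_lintegral_Wmeas μ N hW V]
  simpa [HasFiniteIntegral, Real.enorm_eq_ofReal (exp_nonneg _)] using hV.2.ne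

theorem statement7_general (μ : Measure Λ) [SigmaFinite μ]
    (N m : ℕ)
    (P W : (Fin N → Λ) → ℝ) (hPmeas : Measurable P)
    (hPprob : ∫⁻ x, ENNReal.ofReal (P x) ∂(pm μ N) = 1)
    (hPpos : ∀ᵐ x ∂(pm μ N), 0 < P x)
    (hWmeas : Measurable W)
    (hWlogP : Integrable (fun x => max (W x + Real.log (P x)) 0) (Pmeas μ N P))
    (V : (Fin N → Λ) → ℝ) (hV : memVP μ N m P W V) :
    0 < FP μ N P W V ∧
      FP μ N P W V
        ≤ Real.exp (∫ x, max (W x + Real.log (P x)) 0 ∂(Pmeas μ N P)) := by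
  obtain ⟨hVint, hVexp, -⟩ := hV
  set M := ∫ x, max (W x + log (P x)) 0 ∂Pmeas μ N P
  have hbound : ENNReal.ofReal (exp (-∫ x, V x ∂Pmeas μ N P - M)) ≤ ZE μ N W V :=
    ofReal_exp_neg_integral_le_lintegral hPmeas.aemeasurable hPprob hPpos hVint hWlogP
  have hZtop : ZE μ N W V ≠ ∞ := ZE_ne_top hWmeas hVexp
  have hZpos : 0 < Zfun μ N W V :=
    ENNReal.toReal_pos ((ENNReal.ofReal_pos.2 (exp_pos _)).trans_le hbound).ne' hZtop
  rw [ENNReal.ofReal_le_iff_le_toReal hZtop] at hbound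
  refine ⟨div_pos (exp_pos _) hZpos, ?_⟩
  rw [FP, div_le_iff₀ hZpos]
  calc exp (-∫ x, V x ∂Pmeas μ N P) = exp M * exp (-∫ x, V x ∂Pmeas μ N P - M) := by
        rw [← exp_add]; ring_nf
    _ ≤ exp M * Zfun μ N W V := by gcongr; exact hbound

/-- If `(W + log P)₊ ∈ L¹(Λ^N; P d^N x)` then `F_P` is bounded on
`V_P`: `0 < F_P(V) ≤ exp(∫ (W + log P)₊ P d^N x)` for every `V ∈ V_P`. -/
theorem statement7 (μ : Measure Λ) [SigmaFinite μ] (hμ : μ ≠ 0)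
    (N m : ℕ) (hN : 2 ≤ N) (hm : 1 ≤ m) (hmN : m ≤ N)
    (P W : (Fin N → Λ) → ℝ) (hPmeas : Measurable P)
    (hPprob : ∫⁻ x, ENNReal.ofReal (P x) ∂(pm μ N) = 1)
    (hPpos : ∀ᵐ x ∂(pm μ N), 0 < P x)
    (hWmeas : Measurable W)
    (hWlogP : Integrable (fun x => max (W x + Real.log (P x)) 0) (Pmeas μ N P))
    (V : (Fin N → Λ) → ℝ) (hV : memVP μ N m P W V) :
    0 < FP μ N P W V ∧
      FP μ N P W V
        ≤ Real.exp (∫ x, max (W x + Real.log (P x)) 0 ∂(Pmeas μ N P)) :=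
  statement7_general μ N m P W hPmeas hPprob hPpos hWmeas hWlogP V hV

end
end

section
/- Assume (W + log P)₊ ∈ L¹(Λ^N; P d^N x). Let U be a measurable extended-real-valued function on Λ^N with ∫_{Λ^N} e^{−U−W} d^N x = 1. Then the negative part U₋ = max(−U, 0) belongs to L¹(Λ^N; P d^N x). -/
open MeasureTheory Real Filter
open scoped ENNReal

noncomputable section

variable {Λ : Type*} [MeasurableSpace Λ]

/-- The image in `ℝ≥0∞` of the positive part of an extended real number. -/
def posE : EReal → ℝ≥0∞
  | ⊥ => 0
  | ⊤ => ⊤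
  | (x : ℝ) => ENNReal.ofReal x

/-! Pointwise, `t ≤ eᵗ` at `t = u - w - log P` gives `u₊ ≤ e^{u-w}/P + (w + log P)₊`.
Integrated against `P d^N x`, the first term becomes `∫ e^{-U-W} d^N x = 1` (with `u = -U`,
`w = W`) and the second is finite by hypothesis. -/

theorem max_zero_le_exp_sub_add_max_zero (r s : ℝ) : max r 0 ≤ exp (r - s) + max s 0 :=
  max_le (by linarith [add_one_le_exp (r - s), le_max_left s 0]) (by positivity)

theorem posE_le_inv_mul_exp_add {p : ℝ} (hp : 0 < p) (u : EReal) (w : ℝ) :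
    posE u ≤ (ENNReal.ofReal p)⁻¹ * EReal.exp (u + ((-w : ℝ) : EReal))
      + ENNReal.ofReal (max (w + log p) 0) := by
  induction u using EReal.rec with
  | bot => exact zero_le
  | top =>
    have hinv : (ENNReal.ofReal p)⁻¹ ≠ 0 := ENNReal.inv_ne_zero.2 ENNReal.ofReal_ne_top
    simp [ENNReal.mul_top hinv]
  | coe r =>
    have hexp : exp (r - (w + log p)) = p⁻¹ * exp (r - w) := by
      rw [← sub_sub, exp_sub, exp_log hp, div_eq_inv_mul]
    rw [← EReal.coe_add, EReal.exp_coe, ← ENNReal.ofReal_inv_of_pos hp,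
      ← ENNReal.ofReal_mul (inv_nonneg.2 hp.le),
      ← sub_eq_add_neg, ← ENNReal.ofReal_add (by positivity) (le_max_right _ _), ← hexp]
    exact ENNReal.ofReal_le_ofReal
      ((le_max_left r 0).trans (max_zero_le_exp_sub_add_max_zero r (w + log p)))

section WithDensity

variable {α : Type*} [MeasurableSpace α] {ν : Measure α}

theorem lintegral_withDensity_inv_mul {f : α → ℝ≥0∞} (hf : Measurable f)
    (hf_ne_zero : ∀ᵐ x ∂ν, f x ≠ 0) (hf_ne_top : ∀ᵐ x ∂ν, f x ≠ ∞) (g : α → ℝ≥0∞) :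
    ∫⁻ x, (f x)⁻¹ * g x ∂ν.withDensity f = ∫⁻ x, g x ∂ν := by
  rw [lintegral_withDensity_eq_lintegral_mul_non_measurable _ hf
    (hf_ne_top.mono fun _ hx => hx.lt_top)]
  refine lintegral_congr_ae ?_
  filter_upwards [hf_ne_zero, hf_ne_top] with x h0 htop
  exact ENNReal.mul_inv_cancel_left h0 htop

theorem lintegral_posE_le {P w : α → ℝ} (hP : Measurable P) (hP_pos : ∀ᵐ x ∂ν, 0 < P x)
    (hw : AEMeasurable (fun x => max (w x + log (P x)) 0)
      (ν.withDensity fun x => ENNReal.ofReal (P x)))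
    (u : α → EReal) :
    ∫⁻ x, posE (u x) ∂ν.withDensity (fun x => ENNReal.ofReal (P x))
      ≤ ∫⁻ x, EReal.exp (u x + ((-w x : ℝ) : EReal)) ∂ν
        + ∫⁻ x, ENNReal.ofReal (max (w x + log (P x)) 0)
            ∂ν.withDensity (fun x => ENNReal.ofReal (P x)) := by
  have hbound : ∀ᵐ x ∂ν.withDensity (fun x => ENNReal.ofReal (P x)),
      posE (u x) ≤ (ENNReal.ofReal (P x))⁻¹ * EReal.exp (u x + ((-w x : ℝ) : EReal))
        + ENNReal.ofReal (max (w x + log (P x)) 0) :=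
    withDensity_absolutelyContinuous _ _ <| hP_pos.mono fun x hx =>
      posE_le_inv_mul_exp_add hx (u x) (w x)
  refine (lintegral_mono_ae hbound).trans_eq ?_
  rw [lintegral_add_right' _ hw.ennreal_ofReal,
    lintegral_withDensity_inv_mul hP.ennreal_ofReal
      (hP_pos.mono fun _ hx => ENNReal.ofReal_pos.2 hx |>.ne')
      (Filter.Eventually.of_forall fun _ => ENNReal.ofReal_ne_top)]

end WithDensity

theorem statement9_general (μ : Measure Λ)
    (N : ℕ)
    (P W : (Fin N → Λ) → ℝ) (hPmeas : Measurable P)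
    (hPpos : ∀ᵐ x ∂(pm μ N), 0 < P x)
    (hWlogP : Integrable (fun x => max (W x + Real.log (P x)) 0) (Pmeas μ N P))
    (U : (Fin N → Λ) → EReal)
    (hUnorm : ∫⁻ x, EReal.exp (-(U x) + ((-(W x) : ℝ) : EReal)) ∂(pm μ N) = 1) :
    ∫⁻ x, posE (-(U x)) ∂(Pmeas μ N P) ≠ ⊤ := by
  refine ne_top_of_le_ne_top ?_
    (lintegral_posE_le hPmeas hPpos hWlogP.aemeasurable fun x => -(U x))
  rw [hUnorm]
  exact ENNReal.add_ne_top.2 ⟨ENNReal.one_ne_top, hWlogP.lintegral_lt_top.ne⟩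

/-- Assume `(W + log P)₊ ∈ L¹(Λ^N; P d^N x)`.  If `U` is a measurable
extended-real-valued function with `∫ e^{-U-W} d^N x = 1`, then the negative part
`U₋ = max(-U, 0)` belongs to `L¹(Λ^N; P d^N x)`. -/
theorem statement9 (μ : Measure Λ) [SigmaFinite μ] (hμ : μ ≠ 0)
    (N : ℕ) (hN : 2 ≤ N)
    (P W : (Fin N → Λ) → ℝ) (hPmeas : Measurable P)
    (hPprob : ∫⁻ x, ENNReal.ofReal (P x) ∂(pm μ N) = 1)
    (hPpos : ∀ᵐ x ∂(pm μ N), 0 < P x)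
    (hWmeas : Measurable W)
    (hWlogP : Integrable (fun x => max (W x + Real.log (P x)) 0) (Pmeas μ N P))
    (U : (Fin N → Λ) → EReal) (hUmeas : Measurable U)
    (hUnorm : ∫⁻ x, EReal.exp (-(U x) + ((-(W x) : ℝ) : EReal)) ∂(pm μ N) = 1) :
    ∫⁻ x, posE (-(U x)) ∂(Pmeas μ N P) ≠ ⊤ :=
  statement9_general μ N P W hPmeas hPpos hWlogP U hUnorm
end
end
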